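/- The discrete homotopy operator inverts the forward difference on exact expressions: if f ∈ S = MvPolynomial ℤ ℝ has only nonnegative shifts of order at most M, has zero constant term, and satisfies L⁰ f = 0, then f = Δ (N (I f)); that is, F = N (I f) is an explicit polynomial with Δ F = f. -/

import Mathlib

open MvPolynomial

/-- The shift operator on `S = ℝ[…, X₋₁, X₀, X₁, …]` sending `X_k` to `X_{k+m}`;
`shift 1` is the up-shift operator `D`, and `shift (-k)` is `D^{-k}`. -/
noncomputable def shift (m : ℤ) (f : MvPolynomial ℤ ℝ) : MvPolynomial ℤ ℝ :=
  rename (fun k : ℤ => k + m) f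

/-- The forward difference operator `Δ = D − id`. -/
noncomputable def delta (f : MvPolynomial ℤ ℝ) : MvPolynomial ℤ ℝ :=
  shift 1 f - f

/-- The discrete Euler operator `L⁰ f = Σ_{k∈ℤ} D^{−k} (∂f/∂X_k)`. -/
noncomputable def dEuler (f : MvPolynomial ℤ ℝ) : MvPolynomial ℤ ℝ :=
  ∑ k ∈ f.vars, shift (-k) (pderiv k f)

/-- The inverse degree operator `N f = Σ_{d≥1} (1/d) · f_d`, where `f_d` is the
homogeneous component of `f` of total degree `d`. -/
noncomputable def Nop (f : MvPolynomial ℤ ℝ) : MvPolynomial ℤ ℝ :=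
  ∑ d ∈ Finset.Icc 1 f.totalDegree, ((d : ℝ)⁻¹) • homogeneousComponent d f

/-- The discrete homotopy integrand
`I f = Σ_{i=0}^{M−1} Xᵢ · Σ_{k=i+1}^{M} D^{−(k−i)} (∂f/∂X_k)`
for `f` with only nonnegative shifts of order at most `M`. -/
noncomputable def dIntegrand (M : ℕ) (f : MvPolynomial ℤ ℝ) : MvPolynomial ℤ ℝ :=
  ∑ i ∈ Finset.range M,
    X (i : ℤ) * ∑ k ∈ Finset.Icc (i + 1) M,
      shift (-((k : ℤ) - (i : ℤ))) (pderiv (k : ℤ) f)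

/-! ### Auxiliary lemmas about `shift` -/

lemma shift_shift (a b : ℤ) (f : MvPolynomial ℤ ℝ) : shift a (shift b f) = shift (a + b) f := by
  rw [shift, shift, shift, rename_rename]
  have : ((fun k : ℤ => k + a) ∘ fun k : ℤ => k + b) = fun k : ℤ => k + (a + b) := by
    funext k; dsimp; omega
  rw [this]

lemma shift_zero_apply (f : MvPolynomial ℤ ℝ) : shift 0 f = f := by
  have : (fun k : ℤ => k + 0) = id := by funext k; simp
  rw [shift, this, rename_id, AlgHom.id_apply]

lemma shift_X (m k : ℤ) : shift m (X k) = X (k + m) := by simp [shift]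

lemma shift_mul (m : ℤ) (a b : MvPolynomial ℤ ℝ) : shift m (a * b) = shift m a * shift m b := by
  simp [shift]

lemma shift_sum {α : Type*} (m : ℤ) (s : Finset α) (F : α → MvPolynomial ℤ ℝ) :
    shift m (∑ i ∈ s, F i) = ∑ i ∈ s, shift m (F i) := by
  simp [shift]

lemma shift_smul (m : ℤ) (r : ℝ) (a : MvPolynomial ℤ ℝ) : shift m (r • a) = r • shift m a := by
  simp [shift]

lemma shift_zero_poly (m : ℤ) : shift m (0 : MvPolynomial ℤ ℝ) = 0 := by simp [shift]

lemma delta_smul (r : ℝ) (a : MvPolynomial ℤ ℝ) : delta (r • a) = r • delta a := by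
  rw [delta, delta, shift_smul, smul_sub]

lemma delta_sum {α : Type*} (s : Finset α) (F : α → MvPolynomial ℤ ℝ) :
    delta (∑ i ∈ s, F i) = ∑ i ∈ s, delta (F i) := by
  simp only [delta, shift_sum, Finset.sum_sub_distrib]

lemma delta_zero_poly : delta (0 : MvPolynomial ℤ ℝ) = 0 := by
  rw [delta, shift_zero_poly, sub_zero]

/-! ### Homogeneous components -/

lemma degree_mapDomain (g : ℤ → ℤ) (t : ℤ →₀ ℕ) :
    (Finsupp.mapDomain g t).degree = t.degree := by
  classical
  rw [Finsupp.degree_apply, Finsupp.degree_apply]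
  show (Finsupp.mapDomain g t).sum (fun _ n => n) = t.sum (fun _ n => n)
  exact Finsupp.sum_mapDomain_index (fun _ => rfl) (fun _ _ _ => rfl)

lemma hc_monomial (d : ℕ) (t : ℤ →₀ ℕ) (a : ℝ) :
    homogeneousComponent d (monomial t a) =
      if d = t.degree then monomial t a else 0 := by
  exact homogeneousComponent_of_mem ((mem_homogeneousSubmodule _ _).mpr
    (isHomogeneous_monomial a rfl))

lemma hc_shift (m : ℤ) (d : ℕ) (f : MvPolynomial ℤ ℝ) :
    homogeneousComponent d (shift m f) = shift m (homogeneousComponent d f) := by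
  induction f using MvPolynomial.induction_on' with
  | monomial t a =>
    simp only [shift, rename_monomial, hc_monomial, degree_mapDomain]
    split <;> simp [rename_monomial]
  | add p q hp hq =>
    simp only [shift, map_add] at hp hq ⊢
    rw [hp, hq]

lemma delta_hc (d : ℕ) (f : MvPolynomial ℤ ℝ) :
    delta (homogeneousComponent d f) = homogeneousComponent d (delta f) := by
  rw [delta, delta, map_sub, hc_shift]

/-! ### The Euler identity -/

lemma single_add_sub (k : ℤ) (t : ℤ →₀ ℕ) (h : 1 ≤ t k) :
    Finsupp.single k 1 + (t - Finsupp.single k 1) = t := by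
  ext j
  by_cases hj : j = k
  · subst hj
    simp [Finsupp.single_apply]
    omega
  · simp [Finsupp.single_apply, Ne.symm hj, hj]

lemma euler_monomial (s : Finset ℤ) (t : ℤ →₀ ℕ) (a : ℝ) (hs : t.support ⊆ s) :
    ∑ k ∈ s, X k * pderiv k (monomial t a) = t.degree • monomial t a := by
  classical
  rw [← Finset.sum_subset hs (fun k _ hk => by
    simp [pderiv_monomial, Finsupp.notMem_support_iff.mp hk])]
  have key : ∀ k ∈ t.support, X k * pderiv k (monomial t a) = monomial t (a * t k) := by
    intro k hk
    have htk : 1 ≤ t k := Nat.one_le_iff_ne_zero.mpr (Finsupp.mem_support_iff.mp hk)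
    rw [pderiv_monomial, X, monomial_mul, one_mul, single_add_sub k t htk]
  rw [Finset.sum_congr rfl key, ← map_sum, ← map_nsmul (monomial t) t.degree a]
  congr 1
  rw [← Finset.mul_sum, Finsupp.degree_apply, nsmul_eq_mul]
  push_cast
  ring

lemma euler_hc (s : Finset ℤ) (f : MvPolynomial ℤ ℝ) (hs : f.vars ⊆ s) (d : ℕ) :
    homogeneousComponent d (∑ k ∈ s, X k * pderiv k f) =
      d • homogeneousComponent d f := by
  classical
  have hrw : ∑ k ∈ s, X k * pderiv k f
      = ∑ t ∈ f.support, (t.degree • monomial t (coeff t f)) := by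
    conv_lhs => rw [← support_sum_monomial_coeff f]
    simp only [map_sum, Finset.mul_sum]
    rw [Finset.sum_comm]
    refine Finset.sum_congr rfl fun t ht => ?_
    exact euler_monomial s t (coeff t f) (fun i hi =>
      hs ((mem_vars i).mpr ⟨t, ht, hi⟩))
  rw [hrw, map_sum]
  have : ∀ t ∈ f.support,
      homogeneousComponent d (t.degree • monomial t (coeff t f))
        = d • homogeneousComponent d (monomial t (coeff t f)) := by
    intro t _
    rw [map_nsmul, hc_monomial]
    split
    · next h => rw [h]
    · simp
  rw [Finset.sum_congr rfl this, ← Finset.smul_sum, ← map_sum,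
    support_sum_monomial_coeff f]

/-! ### The telescoping identity -/

/-- integrand tail term -/
noncomputable def Tt (M : ℕ) (f : MvPolynomial ℤ ℝ) (j : ℕ) : MvPolynomial ℤ ℝ :=
  X (j:ℤ) * ∑ k ∈ Finset.Icc (j+1) M, shift (-((k:ℤ)-(j:ℤ))) (pderiv (k:ℤ) f)

/-- integrand full term -/
noncomputable def Ss (M : ℕ) (f : MvPolynomial ℤ ℝ) (j : ℕ) : MvPolynomial ℤ ℝ :=
  X (j:ℤ) * ∑ k ∈ Finset.Icc j M, shift (-((k:ℤ)-(j:ℤ))) (pderiv (k:ℤ) f)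

lemma Icc_insert (j M : ℕ) (hj : j ≤ M) :
    Finset.Icc j M = insert j (Finset.Icc (j+1) M) := by
  rw [Finset.Icc_add_one_left_eq_Ioc, ← Finset.Icc_erase_left,
    Finset.insert_erase (Finset.mem_Icc.mpr ⟨le_refl j, hj⟩)]

lemma Ss_eq (M : ℕ) (f : MvPolynomial ℤ ℝ) (j : ℕ) (hj : j ≤ M) :
    Ss M f j = X (j:ℤ) * pderiv (j:ℤ) f + Tt M f j := by
  rw [Ss, Tt, Icc_insert j M hj, Finset.sum_insert (by simp), sub_self, neg_zero,
    shift_zero_apply, mul_add]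

lemma shift1_Tt (M : ℕ) (f : MvPolynomial ℤ ℝ) (j : ℕ) :
    shift 1 (Tt M f j) = Ss M f (j+1) := by
  have h1 : ((j:ℤ) + 1) = (((j+1:ℕ)):ℤ) := by push_cast; ring
  have hsum : ∀ k ∈ Finset.Icc (j+1) M,
      shift 1 (shift (-((k:ℤ)-(j:ℤ))) (pderiv (k:ℤ) f))
        = shift (-((k:ℤ) - ((j+1:ℕ):ℤ))) (pderiv (k:ℤ) f) := by
    intro k _
    rw [shift_shift]
    congr 1
    push_cast
    ring
  rw [Tt, Ss, shift_mul, shift_X, shift_sum, Finset.sum_congr rfl hsum, h1]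

lemma Tt_M (M : ℕ) (f : MvPolynomial ℤ ℝ) : Tt M f M = 0 := by
  rw [Tt, Finset.Icc_eq_empty (by omega), Finset.sum_empty, mul_zero]

lemma sum_range_succ_split (n : ℕ) (h : ℕ → MvPolynomial ℤ ℝ) :
    ∑ j ∈ Finset.range (n+1), h j = h 0 + ∑ j ∈ Finset.Icc 1 n, h j := by
  rw [Finset.range_eq_Ico, Finset.Ico_add_one_right_eq_Icc, Icc_insert 0 n (Nat.zero_le n),
    Finset.sum_insert (by simp)]

lemma delta_dIntegrand (M : ℕ) (f : MvPolynomial ℤ ℝ) :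
    delta (dIntegrand M f)
      = (∑ k ∈ Finset.range (M+1), X (k:ℤ) * pderiv (k:ℤ) f)
        - X (0:ℤ) * ∑ k ∈ Finset.range (M+1), shift (-(k:ℤ)) (pderiv (k:ℤ) f) := by
  classical
  have hIT : dIntegrand M f = ∑ j ∈ Finset.range M, Tt M f j := rfl
  have hshift1 : shift 1 (dIntegrand M f) = ∑ j ∈ Finset.Icc 1 M, Ss M f j := by
    rw [hIT, shift_sum]
    rw [Finset.sum_congr rfl (fun j _ => shift1_Tt M f j)]
    rw [← Finset.Ico_add_one_right_eq_Icc, Finset.sum_Ico_eq_sum_range]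
    refine Finset.sum_congr (by congr 1) fun j _ => ?_
    rw [Nat.add_comm]
  have hSsum : ∑ j ∈ Finset.Icc 1 M, Ss M f j
      = ∑ j ∈ Finset.Icc 1 M, (X (j:ℤ) * pderiv (j:ℤ) f) + ∑ j ∈ Finset.Icc 1 M, Tt M f j := by
    rw [← Finset.sum_add_distrib]
    exact Finset.sum_congr rfl fun j hj => Ss_eq M f j (Finset.mem_Icc.mp hj).2
  have hTrange : ∑ j ∈ Finset.range M, Tt M f j = ∑ j ∈ Finset.range (M+1), Tt M f j := by
    rw [Finset.sum_range_succ, Tt_M, add_zero]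
  have hS0 : Ss M f 0 = X (0:ℤ) * ∑ k ∈ Finset.range (M+1), shift (-(k:ℤ)) (pderiv (k:ℤ) f) := by
    rw [Ss, Finset.range_eq_Ico, Finset.Ico_add_one_right_eq_Icc]
    have : ∀ k ∈ Finset.Icc 0 M, shift (-((k:ℤ)-((0:ℕ):ℤ))) (pderiv (k:ℤ) f)
        = shift (-(k:ℤ)) (pderiv (k:ℤ) f) := by
      intro k _
      norm_num
    rw [Finset.sum_congr rfl this]
    norm_num
  have hX : ∑ j ∈ Finset.range (M+1), (X (j:ℤ) * pderiv (j:ℤ) f)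
      = X (0:ℤ) * pderiv (0:ℤ) f + ∑ j ∈ Finset.Icc 1 M, (X (j:ℤ) * pderiv (j:ℤ) f) := by
    simpa using sum_range_succ_split M (fun j => X (j:ℤ) * pderiv (j:ℤ) f)
  have hT : ∑ j ∈ Finset.range (M+1), Tt M f j = Tt M f 0 + ∑ j ∈ Finset.Icc 1 M, Tt M f j :=
    sum_range_succ_split M _
  have hS0' : X (0:ℤ) * pderiv (0:ℤ) f + Tt M f 0 = Ss M f 0 := (Ss_eq M f 0 (Nat.zero_le M)).symm
  rw [delta, hshift1, hSsum, hIT, hTrange, hX, hT, ← hS0, ← hS0']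
  ring

/-! ### Main theorem -/

/-- The discrete homotopy operator inverts the forward difference on exact
expressions: `F = N (I f)` satisfies `Δ F = f`. -/
theorem discrete_homotopy_inverts_delta (M : ℕ) (f : MvPolynomial ℤ ℝ)
    (hM : ∀ v ∈ f.vars, 0 ≤ v ∧ v ≤ (M : ℤ))
    (hf : constantCoeff f = 0) (hE : dEuler f = 0) :
    f = delta (Nop (dIntegrand M f)) := by
  classical
  set t : Finset ℤ := Finset.image (Nat.cast : ℕ → ℤ) (Finset.range (M+1)) with ht
  have hvars : f.vars ⊆ t := by
    intro v hv
    obtain ⟨h0, h1⟩ := hM v hv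
    refine Finset.mem_image.mpr ⟨v.toNat, Finset.mem_range.mpr ?_, by omega⟩
    omega
  have hinj : Set.InjOn (Nat.cast : ℕ → ℤ) (Finset.range (M+1)) := by
    intro a _ b _ h
    exact_mod_cast h
  -- the ℕ-indexed euler sum vanishes
  have hEt : ∑ k ∈ t, shift (-k) (pderiv k f) = 0 := by
    rw [← Finset.sum_subset hvars (fun k _ hk => by
      rw [pderiv_eq_zero_of_notMem_vars hk, shift_zero_poly])]
    exact hE
  have hEul0 : ∑ k ∈ Finset.range (M+1), shift (-(k:ℤ)) (pderiv (k:ℤ) f) = 0 := by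
    rw [← Finset.sum_image (f := fun k : ℤ => shift (-k) (pderiv k f)) hinj]
    exact hEt
  -- delta of the integrand is the Euler sum
  have hDelta : delta (dIntegrand M f)
      = ∑ k ∈ t, X k * pderiv k f := by
    rw [delta_dIntegrand, hEul0, mul_zero, sub_zero,
      ← Finset.sum_image (f := fun k : ℤ => X k * pderiv k f) hinj]
  -- homogeneous components
  have hhc : ∀ d : ℕ, homogeneousComponent d (delta (dIntegrand M f))
      = d • homogeneousComponent d f := by
    intro d
    rw [hDelta]
    exact euler_hc t f hvars d
  set P := dIntegrand M f with hP
  set D := P.totalDegree with hD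
  -- vanishing of high components of f
  have hvanish : ∀ d : ℕ, D < d → homogeneousComponent d f = 0 := by
    intro d hd
    have h1 : homogeneousComponent d P = 0 := homogeneousComponent_eq_zero _ _ hd
    have h2 : (d : ℕ) • homogeneousComponent d f = 0 := by
      rw [← hhc d, ← delta_hc, h1, delta_zero_poly]
    have hd1 : d ≠ 0 := by omega
    have := smul_eq_zero.mp h2
    rcases this with h | h
    · exact absurd h hd1
    · exact h
  have hf0 : homogeneousComponent 0 f = 0 := by
    rw [homogeneousComponent_zero]
    have : coeff 0 f = constantCoeff f := rfl
    rw [this, hf, map_zero]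
  -- compute delta (Nop P)
  have hmain : delta (Nop P) = ∑ d ∈ Finset.Icc 1 D, homogeneousComponent d f := by
    rw [Nop, delta_sum]
    refine Finset.sum_congr rfl fun d hd => ?_
    obtain ⟨hd1, _⟩ := Finset.mem_Icc.mp hd
    rw [delta_smul, delta_hc, hhc d]
    have hdne : ((d:ℝ)) ≠ 0 := by
      exact_mod_cast (by omega : (d:ℕ) ≠ 0)
    rw [← Nat.cast_smul_eq_nsmul ℝ d, smul_smul, inv_mul_cancel₀ hdne, one_smul]
  -- f equals the sum of its positive homogeneous components up to D
  set N := max D f.totalDegree with hN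
  have hsum1 : ∑ d ∈ Finset.Icc 1 D, homogeneousComponent d f
      = ∑ d ∈ Finset.Icc 1 N, homogeneousComponent d f := by
    refine Finset.sum_subset (Finset.Icc_subset_Icc_right (le_max_left _ _)) ?_
    intro d hdN hdD
    have h1 : 1 ≤ d := (Finset.mem_Icc.mp hdN).1
    have : D < d := by
      by_contra h
      exact hdD (Finset.mem_Icc.mpr ⟨h1, by omega⟩)
    exact hvanish d this
  have hsum2 : f = ∑ d ∈ Finset.Icc 1 N, homogeneousComponent d f := by
    conv_lhs => rw [← sum_homogeneousComponent f]
    rw [sum_range_succ_split, hf0, zero_add]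
    refine Finset.sum_subset (Finset.Icc_subset_Icc_right (le_max_right _ _)) ?_
    intro d hdN hdd
    have h1 : 1 ≤ d := (Finset.mem_Icc.mp hdN).1
    have : f.totalDegree < d := by
      by_contra h
      exact hdd (Finset.mem_Icc.mpr ⟨h1, by omega⟩)
    exact homogeneousComponent_eq_zero _ _ this
  rw [hmain, hsum1, ← hsum2]
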